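/- arXiv:physics/0412157 — 5 statements merged into one kernel-verified Lean document; each statement's English description precedes it below -/
import Mathlib

section
/- Let A : ℝ → ℝ^{3×3} be a C¹ map, 2π-periodic, whose values are skew-symmetric matrices, and let Φ : ℝ → ℝ^{3×3} be the unique solution of the initial value problem Φ'(θ) = A(θ)Φ(θ), Φ(0) = I. Then there exist ν̂ ∈ [0,1), a matrix Ŵ ∈ SO(3), and a C¹, 2π-periodic map p̂ : ℝ → SO(3) with p̂(0) = I such that Φ(θ) = p̂(θ) Ŵ exp(𝒥 ν̂ θ) Ŵᵀ for all θ ∈ ℝ; moreover the set of complex eigenvalues of Φ(2π) is {e^{2πiν̂}, e^{−2πiν̂}, 1}. -/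
open MeasureTheory Filter
noncomputable section

/-- The matrix 𝒥: (2,1)-entry 1, (1,2)-entry −1, all other entries 0. -/
def Jmat : Matrix (Fin 3) (Fin 3) ℝ := Matrix.of ![![0, -1, 0], ![1, 0, 0], ![0, 0, 0]]

/-- The special orthogonal group SO(3): RᵀR = I and det R = 1. -/
def SO3 : Set (Matrix (Fin 3) (Fin 3) ℝ) := {R | R.transpose * R = 1 ∧ R.det = 1}

/-- 2π-periodicity in each of the k arguments. -/
def Periodic2Pi {k : ℕ} {E : Type*} (F : (Fin k → ℝ) → E) : Prop :=
  ∀ (z : Fin k → ℝ) (i : Fin k), F (Function.update z i (z i + 2 * Real.pi)) = F z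

/-- `f : ℝ → E` is quasiperiodic with tune vector `ν ∈ ℝ^k` if `f θ = F (νθ)` for a
continuous `F` that is 2π-periodic in each argument. -/
def IsQuasiperiodic {E : Type*} [TopologicalSpace E] {k : ℕ} (ν : Fin k → ℝ) (f : ℝ → E) : Prop :=
  ∃ F : (Fin k → ℝ) → E, Continuous F ∧ Periodic2Pi F ∧ ∀ θ : ℝ, f θ = F fun i => ν i * θ

/-- integer dot product `m · v` -/
def zdot {k : ℕ} (m : Fin k → ℤ) (v : Fin k → ℝ) : ℝ := ∑ i, (m i : ℝ) * v i

/-- `ν` is nonresonant if `m · ν = 0` only for `m = 0`. -/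
def Nonresonant {k : ℕ} (ν : Fin k → ℝ) : Prop :=
  ∀ m : Fin k → ℤ, zdot m ν = 0 → m = 0

/-- Fourier coefficient `F_m = (2π)^{-k} ∫_{[0,2π]^k} F(z) e^{-i m·z} dz`. -/
def mFourierCoeff {k : ℕ} (F : (Fin k → ℝ) → ℂ) (m : Fin k → ℤ) : ℂ :=
  ((2 * Real.pi) ^ k : ℝ)⁻¹ •
    ∫ z in Set.Icc (0 : Fin k → ℝ) (fun _ => 2 * Real.pi),
      F z * Complex.exp (-Complex.I * ∑ i, (m i : ℝ) * z i)

/-- The phase space `ℝ × ℝ^d` of pairs `(θ, φ)`. -/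
abbrev Pt (d : ℕ) := ℝ × (Fin d → ℝ)

/-- The vector `(1, ω) ∈ ℝ^{d+1}`. -/
def oneOmega {d : ℕ} (ω : Fin d → ℝ) : Fin (d + 1) → ℝ := Fin.cons 1 ω

/-- max norm `‖m‖ = max_i |m_i|` of an integer vector. -/
def intNorm {k : ℕ} (m : Fin k → ℤ) : ℕ := Finset.univ.sup fun i => (m i).natAbs

/-- The Diophantine set `Ω(τ) = ⋃_{γ ∈ (0,1]} Ω(τ,γ)` where
`Ω(τ,γ) = {ω : |m·(1,ω)| ≥ γ‖m‖^{-τ} for all nonzero m ∈ ℤ^{d+1}}`. -/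
def DiophSet (d : ℕ) (τ : ℝ) : Set (Fin d → ℝ) :=
  ⋃ γ ∈ Set.Ioc (0 : ℝ) 1,
    {ω | ∀ m : Fin (d + 1) → ℤ, m ≠ 0 → γ * (intNorm m : ℝ) ^ (-τ) ≤ |zdot m (oneOmega ω)|}

/-- The derivation 𝒟 applied to the entries of a matrix-valued function:
`(𝒟V)(p) = ∂_θ V + ω·∇_φ V`, i.e. the directional derivative along `(1, ω)`. -/
def Dmat {d : ℕ} (ω : Fin d → ℝ) (V : Pt d → Matrix (Fin 3) (Fin 3) ℝ) (p : Pt d) :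
    Matrix (Fin 3) (Fin 3) ℝ :=
  Matrix.of fun i j => fderiv ℝ (fun q => V q i j) p (1, ω)

/-- Periodicity: 2π-periodic in θ and in each component of φ. -/
def PeriodicPt {d : ℕ} {E : Type*} (f : Pt d → E) : Prop :=
  (∀ p : Pt d, f (p.1 + 2 * Real.pi, p.2) = f p) ∧
  (∀ (p : Pt d) (i : Fin d), f (p.1, Function.update p.2 i (p.2 i + 2 * Real.pi)) = f p)

/-- A matrix-valued map on `ℝ × ℝ^d` is of class `C^n` (entrywise). -/
def SmoothMat {d : ℕ} (n : ℕ∞) (V : Pt d → Matrix (Fin 3) (Fin 3) ℝ) : Prop :=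
  ∀ i j, ContDiff ℝ n fun p => V p i j

/-- `Φ` is the principal solution matrix at `φ₀`:
`∂_θ Φ(θ) = 𝒜(θ, ωθ + φ₀) Φ(θ)`, `Φ(0) = I`. -/
def IsPrincipalSolution {d : ℕ} (ω : Fin d → ℝ) (𝒜 : Pt d → Matrix (Fin 3) (Fin 3) ℝ)
    (φ₀ : Fin d → ℝ) (Φ : ℝ → Matrix (Fin 3) (Fin 3) ℝ) : Prop :=
  Φ 0 = 1 ∧ ∀ (θ : ℝ) (i j : Fin 3),
    HasDerivAt (fun t => Φ t i j) ((𝒜 (θ, fun l => ω l * θ + φ₀ l) * Φ θ) i j) θ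

/-- A uniform invariant frame field: C¹, 2π-periodic, SO(3)-valued, satisfying
`𝒟𝒱 = 𝒜𝒱 − ν𝒱𝒥` for a constant `ν ∈ [0,1)`. -/
def IsUniformIFF {d : ℕ} (ω : Fin d → ℝ) (𝒜 V : Pt d → Matrix (Fin 3) (Fin 3) ℝ) (ν : ℝ) :
    Prop :=
  SmoothMat 1 V ∧ PeriodicPt V ∧ (∀ p, V p ∈ SO3) ∧ ν ∈ Set.Ico (0 : ℝ) 1 ∧
  ∀ p, Dmat ω V p = 𝒜 p * V p - ν • (V p * Jmat)

/-- An invariant frame field: C¹, 2π-periodic, SO(3)-valued, whose third column 𝔳³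
satisfies `𝒟𝔳³ = 𝒜𝔳³`. -/
def IsIFF {d : ℕ} (ω : Fin d → ℝ) (𝒜 V : Pt d → Matrix (Fin 3) (Fin 3) ℝ) : Prop :=
  SmoothMat 1 V ∧ PeriodicPt V ∧ (∀ p, V p ∈ SO3) ∧
  ∀ (p : Pt d) (i : Fin 3),
    fderiv ℝ (fun q => V q i 2) p (1, ω) = ((𝒜 p).mulVec fun j => V p j 2) i

/-- An invariant spin field: C¹, 2π-periodic, unit length, satisfying `𝒟n = 𝒜n`. -/
def IsISF {d : ℕ} (ω : Fin d → ℝ) (𝒜 : Pt d → Matrix (Fin 3) (Fin 3) ℝ)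
    (n : Pt d → Fin 3 → ℝ) : Prop :=
  (∀ i, ContDiff ℝ 1 fun p => n p i) ∧ PeriodicPt n ∧ (∀ p, ∑ i, n p i ^ 2 = 1) ∧
  ∀ (p : Pt d) (i : Fin 3), fderiv ℝ (fun q => n q i) p (1, ω) = ((𝒜 p).mulVec (n p)) i

/-- cross product on ℝ³ -/
def cross3 (u v : Fin 3 → ℝ) : Fin 3 → ℝ :=
  ![u 1 * v 2 - u 2 * v 1, u 2 * v 0 - u 0 * v 2, u 0 * v 1 - u 1 * v 0]

/-- Euclidean norm on ℝ³ -/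
def nrm3 (v : Fin 3 → ℝ) : ℝ := Real.sqrt (∑ i, v i ^ 2)

/-- normalization of a vector in ℝ³ -/
def unitize (v : Fin 3 → ℝ) : Fin 3 → ℝ := fun i => v i / nrm3 v

/-- the matrix with columns a, b, c -/
def colMat (a b c : Fin 3 → ℝ) : Matrix (Fin 3) (Fin 3) ℝ := (Matrix.of ![a, b, c]).transpose

/-
Skew-symmetry of `A` makes `Φᵀ Ψ` constant for any two solutions of `X' = A X`. Taking `Ψ = Φ`
shows that `Φ` is orthogonal (and then in `SO(3)` by continuity of the determinant), taking
`Ψ θ = Φ (θ + 2π)` gives the monodromy relation `Φ (θ + 2π) = Φ θ Φ(2π)`, and taking `A = 𝒥`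
identifies `exp (s 𝒥)` with the rotation by `s` about the third axis. By Euler's rotation theorem
`Φ(2π) = Ŵ exp (2πν̂ 𝒥) Ŵᵀ` with `ν̂ ∈ [0, 1)`, so that `p̂ θ = Φ θ Ŵ exp (-ν̂θ 𝒥) Ŵᵀ` is
`2π`-periodic, and the eigenvalues of `Φ(2π)` are those of the rotation `exp (2πν̂ 𝒥)`.
-/

open Real Matrix

namespace Matrix

section EntrywiseCalculus

variable {l m n : Type*} [Fintype m]

theorem hasDerivAt_mul_apply {f : ℝ → Matrix l m ℝ} {g : ℝ → Matrix m n ℝ}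
    {f' : Matrix l m ℝ} {g' : Matrix m n ℝ} {θ : ℝ}
    (hf : ∀ i j, HasDerivAt (fun t => f t i j) (f' i j) θ)
    (hg : ∀ i j, HasDerivAt (fun t => g t i j) (g' i j) θ) (i : l) (j : n) :
    HasDerivAt (fun t => (f t * g t) i j) ((f' * g θ + f θ * g') i j) θ := by
  simpa [mul_apply, Finset.sum_add_distrib] using
    HasDerivAt.fun_sum (u := Finset.univ) fun k _ => (hf i k).mul (hg k j)

theorem contDiff_mul_apply {k : WithTop ℕ∞} {f : ℝ → Matrix l m ℝ} {g : ℝ → Matrix m n ℝ}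
    (hf : ∀ i j, ContDiff ℝ k fun t => f t i j) (hg : ∀ i j, ContDiff ℝ k fun t => g t i j)
    (i : l) (j : n) : ContDiff ℝ k fun t => (f t * g t) i j := by
  simp only [mul_apply]
  exact ContDiff.sum fun k _ => (hf i k).mul (hg k j)

omit [Fintype m] in
theorem eq_of_hasDerivAt_apply_zero {f : ℝ → Matrix l m ℝ}
    (hf : ∀ θ i j, HasDerivAt (fun t => f t i j) 0 θ) (θ θ₀ : ℝ) : f θ = f θ₀ := by
  ext i j
  exact is_const_of_deriv_eq_zero (fun x => (hf x i j).differentiableAt)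
    (fun x => (hf x i j).deriv) θ θ₀

theorem contDiff_one_apply_of_hasDerivAt {A Φ : ℝ → Matrix m m ℝ}
    (hA : ∀ i j, Continuous fun θ => A θ i j)
    (hΦ : ∀ θ i j, HasDerivAt (fun t => Φ t i j) ((A θ * Φ θ) i j) θ) (i j : m) :
    ContDiff ℝ 1 fun θ => Φ θ i j := by
  have hΦcont : ∀ i j, Continuous fun θ => Φ θ i j := fun i j =>
    continuous_iff_continuousAt.mpr fun θ => (hΦ θ i j).continuousAt
  refine contDiff_one_iff_deriv.mpr ⟨fun θ => (hΦ θ i j).differentiableAt, ?_⟩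
  have hderiv : deriv (fun t => Φ t i j) = fun θ => ∑ k, A θ i k * Φ θ k j :=
    funext fun θ => by rw [(hΦ θ i j).deriv, mul_apply]
  rw [hderiv]
  exact continuous_finsetSum _ fun k _ => (hA i k).mul (hΦcont k j)

end EntrywiseCalculus

section SkewSystem

variable {n : Type*} [Fintype n] {A : ℝ → Matrix n n ℝ}

theorem transpose_mul_eq_of_skew (hA : ∀ θ, (A θ)ᵀ = -A θ) {Φ Ψ : ℝ → Matrix n n ℝ}
    (hΦ : ∀ θ i j, HasDerivAt (fun t => Φ t i j) ((A θ * Φ θ) i j) θ)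
    (hΨ : ∀ θ i j, HasDerivAt (fun t => Ψ t i j) ((A θ * Ψ θ) i j) θ) (θ : ℝ) :
    (Φ θ)ᵀ * Ψ θ = (Φ 0)ᵀ * Ψ 0 := by
  refine eq_of_hasDerivAt_apply_zero (f := fun t => (Φ t)ᵀ * Ψ t) (fun t i j => ?_) θ 0
  have hΦT : ∀ i j, HasDerivAt (fun s => (Φ s)ᵀ i j) ((A t * Φ t)ᵀ i j) t :=
    fun i j => hΦ t j i
  convert hasDerivAt_mul_apply hΦT (hΨ t) i j using 1
  rw [transpose_mul, hA, mul_neg, neg_mul, mul_assoc, neg_add_cancel, zero_apply]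

variable [DecidableEq n] {Φ : ℝ → Matrix n n ℝ}

theorem transpose_mul_self_eq_one_of_skew (hA : ∀ θ, (A θ)ᵀ = -A θ)
    (hΦ : ∀ θ i j, HasDerivAt (fun t => Φ t i j) ((A θ * Φ θ) i j) θ) (hΦ0 : Φ 0 = 1)
    (θ : ℝ) : (Φ θ)ᵀ * Φ θ = 1 := by
  simpa [hΦ0] using transpose_mul_eq_of_skew hA hΦ hΦ θ

theorem mem_specialOrthogonalGroup_of_skew (hA : ∀ θ, (A θ)ᵀ = -A θ)
    (hΦ : ∀ θ i j, HasDerivAt (fun t => Φ t i j) ((A θ * Φ θ) i j) θ) (hΦ0 : Φ 0 = 1)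
    (θ : ℝ) : Φ θ ∈ specialOrthogonalGroup n ℝ := by
  have horth : ∀ θ, Φ θ ∈ orthogonalGroup n ℝ := fun θ =>
    (mem_orthogonalGroup_iff' n ℝ).mpr (transpose_mul_self_eq_one_of_skew hA hΦ hΦ0 θ)
  have hcont : Continuous fun t => (Φ t).det :=
    (continuous_matrix fun i j => continuous_iff_continuousAt.mpr
      fun t => (hΦ t i j).continuousAt).matrix_det
  have hsq : Set.EqOn ((fun t => (Φ t).det) ^ 2) 1 Set.univ := fun t _ => by
    simpa [sq] using congrArg det ((mem_orthogonalGroup_iff' n ℝ).mp (horth t))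
  refine ⟨horth θ, ?_⟩
  rcases isPreconnected_univ.eq_one_or_eq_neg_one_of_sq_eq hcont.continuousOn hsq with h | h
  · exact h (Set.mem_univ θ)
  · have h0 := h (Set.mem_univ 0)
    norm_num [hΦ0] at h0

theorem apply_add_eq_mul_of_skew (hA : ∀ θ, (A θ)ᵀ = -A θ) {T : ℝ}
    (hper : ∀ θ, A (θ + T) = A θ)
    (hΦ : ∀ θ i j, HasDerivAt (fun t => Φ t i j) ((A θ * Φ θ) i j) θ) (hΦ0 : Φ 0 = 1)
    (θ : ℝ) : Φ (θ + T) = Φ θ * Φ T := by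
  have hshift : ∀ θ i j, HasDerivAt (fun t => Φ (t + T) i j) ((A θ * Φ (θ + T)) i j) θ := by
    intro θ i j
    simpa [hper] using (hΦ (θ + T) i j).comp_add_const θ T
  have hpair := transpose_mul_eq_of_skew hA hΦ hshift θ
  rw [hΦ0, transpose_one, one_mul, zero_add] at hpair
  rw [← hpair, ← mul_assoc, mul_eq_one_comm.mp (transpose_mul_self_eq_one_of_skew hA hΦ hΦ0 θ),
    one_mul]

end SkewSystem

section OrthogonalGroup

variable {n : Type*} [Fintype n] [DecidableEq n]

theorem transpose_mem_specialOrthogonalGroup {W : Matrix n n ℝ}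
    (hW : W ∈ specialOrthogonalGroup n ℝ) :
    Wᵀ ∈ specialOrthogonalGroup n ℝ := by
  rw [mem_specialOrthogonalGroup_iff, mem_orthogonalGroup_iff', transpose_transpose,
    ← mem_orthogonalGroup_iff, det_transpose]
  exact mem_specialOrthogonalGroup_iff.mp hW

theorem det_sub_one_eq_zero_of_odd (hn : Odd (Fintype.card n)) {R : Matrix n n ℝ}
    (hR : R ∈ specialOrthogonalGroup n ℝ) :
    (R - 1).det = 0 := by
  have h : (R - 1)ᵀ = Rᵀ * -(R - 1) := by
    rw [mul_neg, mul_sub, (mem_orthogonalGroup_iff' n ℝ).mp hR.1, transpose_sub, transpose_one,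
      mul_one, neg_sub]
  have hdet := congrArg det h
  rw [det_transpose, det_mul, det_transpose, (mem_specialOrthogonalGroup_iff.mp hR).2, one_mul,
    det_neg, hn.neg_one_pow] at hdet
  linarith

theorem exists_mem_specialOrthogonalGroup_col_eq {i k : n} (hik : i ≠ k)
    {u : EuclideanSpace ℝ n} (hu : ‖u‖ = 1) :
    ∃ W ∈ specialOrthogonalGroup n ℝ, W.col i = u.ofLp := by
  have hsingle : Orthonormal ℝ (({i} : Set n).domRestrict fun _ => u) :=
    orthonormal_subsingleton_iff.mpr fun _ => hu
  obtain ⟨b, hb⟩ := hsingle.exists_orthonormalBasis_extension_of_card_eq finrank_euclideanSpace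
  set W₀ := (EuclideanSpace.basisFun n ℝ).toBasis.toMatrix b
  have hW₀ : W₀ ∈ orthogonalGroup n ℝ :=
    (EuclideanSpace.basisFun n ℝ).toMatrix_orthonormalBasis_mem_orthogonal b
  have hdet₀ : W₀.det * W₀.det = 1 := by
    simpa using congrArg det ((mem_orthogonalGroup_iff' n ℝ).mp hW₀)
  set D : Matrix n n ℝ := diagonal (Function.update 1 k W₀.det)
  have hD : D ∈ orthogonalGroup n ℝ := by
    rw [mem_orthogonalGroup_iff', diagonal_transpose, diagonal_mul_diagonal, ← diagonal_one]
    congr 1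
    ext j
    rcases eq_or_ne j k with rfl | hjk <;> simp [*]
  refine ⟨W₀ * D, ⟨Submonoid.mul_mem _ hW₀ hD, ?_⟩, ?_⟩
  · simp [D, det_diagonal, Function.update_apply, Finset.prod_ite_eq', hdet₀]
  · ext j
    simp [D, W₀, hik, Module.Basis.toMatrix_apply, hb i rfl]

theorem spectrum_map_conj_of_mem_orthogonalGroup {W : Matrix n n ℝ}
    (hW : W ∈ orthogonalGroup n ℝ) (M : Matrix n n ℝ) :
    spectrum ℂ ((W * M * Wᵀ).map (fun x : ℝ => (x : ℂ))) =
      spectrum ℂ (M.map (fun x : ℝ => (x : ℂ))) := by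
  let f : Matrix n n ℝ →+* Matrix n n ℂ := Complex.ofRealHom.mapMatrix
  let u : (Matrix n n ℂ)ˣ :=
    ⟨f W, f Wᵀ, by rw [← map_mul, (mem_orthogonalGroup_iff n ℝ).mp hW, map_one],
      by rw [← map_mul, (mem_orthogonalGroup_iff' n ℝ).mp hW, map_one]⟩
  change spectrum ℂ (f (W * M * Wᵀ)) = spectrum ℂ (f M)
  rw [map_mul, map_mul]
  exact spectrum.units_conjugate (u := u)

end OrthogonalGroup

end Matrix

theorem exists_cos_eq_sin_eq {a c : ℝ} (h : a ^ 2 + c ^ 2 = 1) :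
    ∃ α, cos α = a ∧ sin α = c := by
  have hz : ‖(⟨a, c⟩ : ℂ)‖ = 1 := by
    rw [Complex.norm_def, Complex.normSq_mk, ← sq, ← sq, h, sqrt_one]
  refine ⟨Complex.arg ⟨a, c⟩, ?_, ?_⟩
  · rw [Complex.cos_arg (norm_ne_zero_iff.mp (hz ▸ one_ne_zero)), hz, div_one]
  · rw [Complex.sin_arg, hz, div_one]

theorem SO3_eq_specialOrthogonalGroup :
    SO3 = (specialOrthogonalGroup (Fin 3) ℝ : Set (Matrix (Fin 3) (Fin 3) ℝ)) := by
  ext R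
  simp [SO3, mem_specialOrthogonalGroup_iff, mem_orthogonalGroup_iff']

theorem Jmat_transpose : Jmatᵀ = -Jmat := by
  ext i j
  fin_cases i <;> fin_cases j <;> simp [Jmat]

def rotZ (s : ℝ) : Matrix (Fin 3) (Fin 3) ℝ :=
  !![cos s, -sin s, 0; sin s, cos s, 0; 0, 0, 1]

theorem rotZ_zero : rotZ 0 = 1 := by
  ext i j
  fin_cases i <;> fin_cases j <;> simp [rotZ]

theorem rotZ_add (a b : ℝ) : rotZ (a + b) = rotZ a * rotZ b := by
  ext i j
  fin_cases i <;> fin_cases j <;>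
    simp [rotZ, mul_apply, Fin.sum_univ_three, cos_add, sin_add] <;> ring

theorem conj_rotZ_mul_conj_rotZ {W : Matrix (Fin 3) (Fin 3) ℝ} (hW : Wᵀ * W = 1) (a b : ℝ) :
    W * rotZ a * Wᵀ * (W * rotZ b * Wᵀ) = W * rotZ (a + b) * Wᵀ := by
  rw [rotZ_add]
  simp only [mul_assoc, ← mul_assoc Wᵀ, hW, one_mul]

theorem rotZ_sub_int_mul_two_pi (s : ℝ) (k : ℤ) : rotZ (s - k * (2 * π)) = rotZ s := by
  simp [rotZ, cos_sub_int_mul_two_pi, sin_sub_int_mul_two_pi]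

theorem hasDerivAt_rotZ_apply (s : ℝ) (i j : Fin 3) :
    HasDerivAt (fun t => rotZ t i j) ((Jmat * rotZ s) i j) s := by
  fin_cases i <;> fin_cases j <;>
    simp [rotZ, Jmat, mul_apply, Fin.sum_univ_three, hasDerivAt_const, hasDerivAt_sin,
      hasDerivAt_cos]
  exact (hasDerivAt_sin s).neg

theorem contDiff_rotZ_apply (i j : Fin 3) : ContDiff ℝ ⊤ fun t => rotZ t i j := by
  fin_cases i <;> fin_cases j <;>
    simp [rotZ, contDiff_const, contDiff_sin, contDiff_cos, contDiff_sin.neg]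

theorem rotZ_mem_specialOrthogonalGroup (s : ℝ) : rotZ s ∈ specialOrthogonalGroup (Fin 3) ℝ :=
  mem_specialOrthogonalGroup_of_skew (A := fun _ => Jmat) (fun _ => Jmat_transpose)
    hasDerivAt_rotZ_apply rotZ_zero s

theorem hasDerivAt_exp_smul_Jmat_apply (s : ℝ) (i j : Fin 3) :
    HasDerivAt (fun t : ℝ => NormedSpace.exp (t • Jmat) i j)
      ((Jmat * NormedSpace.exp (s • Jmat)) i j) s := by
  let : SeminormedRing (Matrix (Fin 3) (Fin 3) ℝ) := Matrix.linftyOpSemiNormedRing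
  let : NormedRing (Matrix (Fin 3) (Fin 3) ℝ) := Matrix.linftyOpNormedRing
  let : NormedAlgebra ℝ (Matrix (Fin 3) (Fin 3) ℝ) := Matrix.linftyOpNormedAlgebra
  let entry : Matrix (Fin 3) (Fin 3) ℝ →L[ℝ] ℝ :=
    ((LinearMap.proj j).comp (LinearMap.proj (R := ℝ) (φ := fun _ : Fin 3 => Fin 3 → ℝ) i)
      ).toContinuousLinearMap
  exact entry.hasFDerivAt.comp_hasDerivAt s (hasDerivAt_exp_smul_const' (𝕂 := ℝ) Jmat s)

theorem exp_smul_Jmat (s : ℝ) : NormedSpace.exp (s • Jmat) = rotZ s := by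
  have h := transpose_mul_eq_of_skew (A := fun _ => Jmat) (fun _ => Jmat_transpose)
    hasDerivAt_rotZ_apply hasDerivAt_exp_smul_Jmat_apply s
  rw [rotZ_zero, zero_smul, NormedSpace.exp_zero, transpose_one, one_mul] at h
  rw [← one_mul (NormedSpace.exp _), ← (mem_orthogonalGroup_iff (Fin 3) ℝ).mp
    (rotZ_mem_specialOrthogonalGroup s).1, mul_assoc, h, mul_one]

theorem spectrum_map_rotZ (α : ℝ) :
    spectrum ℂ ((rotZ α).map (fun x : ℝ => (x : ℂ))) =
      {Complex.exp (α * Complex.I), Complex.exp (-(α * Complex.I)), 1} := by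
  have hcharpoly : ∀ z : ℂ, (algebraMap ℂ _ z - (rotZ α).map (fun x : ℝ => (x : ℂ))).det =
      (z - Complex.exp (α * Complex.I)) * (z - Complex.exp (-(α * Complex.I))) * (z - 1) := by
    intro z
    rw [← neg_mul, Complex.exp_mul_I, Complex.exp_mul_I, Complex.cos_neg, Complex.sin_neg,
      algebraMap_eq_diagonal, det_fin_three]
    simp only [rotZ, Matrix.sub_apply, map_apply, of_apply, cons_val', cons_val_zero, cons_val_one,
      cons_val, cons_val_fin_one, diagonal_apply_eq, diagonal_apply_ne, ne_eq, Fin.reduceEq,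
      not_false_eq_true, Pi.algebraMap_apply, Algebra.algebraMap_self, RingHom.id_apply,
      Complex.ofReal_cos, Complex.ofReal_sin, Complex.ofReal_zero, Complex.ofReal_one,
      Complex.ofReal_neg]
    linear_combination (z - 1) * Complex.sin α ^ 2 * Complex.I_sq
  ext z
  simp only [spectrum.mem_iff, isUnit_iff_isUnit_det, isUnit_iff_ne_zero, not_not, hcharpoly,
    mul_eq_zero, sub_eq_zero, or_assoc, Set.mem_insert_iff, Set.mem_singleton_iff]

theorem exists_eq_rotZ_of_col_two {M : Matrix (Fin 3) (Fin 3) ℝ}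
    (hM : M ∈ specialOrthogonalGroup (Fin 3) ℝ) (hcol : M.col 2 = Pi.single 2 1) :
    ∃ α, M = rotZ α := by
  have horth := (mem_orthogonalGroup_iff' (Fin 3) ℝ).mp hM.1
  have hrow : M.row 2 = Pi.single 2 1 := by
    have h : Mᵀ *ᵥ (M *ᵥ Pi.single 2 1) = Pi.single 2 1 := by
      rw [mulVec_mulVec, horth, one_mulVec]
    rwa [mulVec_single_one M, hcol, mulVec_single_one, col_transpose] at h
  have hblock : M = !![M 0 0, M 0 1, 0; M 1 0, M 1 1, 0; 0, 0, 1] := by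
    have hc := congrFun hcol
    have hr := congrFun hrow
    simp only [col, row, transpose_apply] at hc hr
    ext i j
    fin_cases i <;> fin_cases j <;> simp [hc, hr]
  have hdet := (mem_specialOrthogonalGroup_iff.mp hM).2
  rw [hblock] at horth hdet
  generalize M 0 0 = a, M 0 1 = b, M 1 0 = c, M 1 1 = d at horth hdet hblock
  have h00 : a ^ 2 + c ^ 2 = 1 := by
    simpa [mul_apply, Fin.sum_univ_three, sq] using congr_fun₂ horth 0 0
  have h01 : a * b + c * d = 0 := by
    simpa [mul_apply, Fin.sum_univ_three] using congr_fun₂ horth 0 1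
  have h11 : b ^ 2 + d ^ 2 = 1 := by
    simpa [mul_apply, Fin.sum_univ_three, sq] using congr_fun₂ horth 1 1
  replace hdet : a * d - b * c = 1 := by simpa [det_fin_three] using hdet
  obtain ⟨α, hcos, hsin⟩ := exists_cos_eq_sin_eq h00
  refine ⟨α, hblock.trans ?_⟩
  rw [rotZ, hcos, hsin, show d = a by linear_combination a * hdet + c * h01 - d * h00,
    show b = -c by linear_combination d * h01 - c * h11 - b * hdet]

/-- Euler's rotation theorem. -/
theorem exists_eq_conj_rotZ {R : Matrix (Fin 3) (Fin 3) ℝ}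
    (hR : R ∈ specialOrthogonalGroup (Fin 3) ℝ) :
    ∃ ν ∈ Set.Ico (0 : ℝ) 1, ∃ W ∈ specialOrthogonalGroup (Fin 3) ℝ,
      R = W * rotZ (2 * π * ν) * Wᵀ := by
  obtain ⟨v, hv0, hv⟩ :=
    exists_mulVec_eq_zero_iff.mpr (det_sub_one_eq_zero_of_odd (by decide) hR)
  rw [sub_mulVec, one_mulVec, sub_eq_zero] at hv
  have hv0' : WithLp.toLp 2 v ≠ 0 := by simpa using hv0
  obtain ⟨W, hW, hWcol⟩ := exists_mem_specialOrthogonalGroup_col_eq (i := 2) (k := 0) (by decide)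
    (norm_smul_inv_norm (𝕜 := ℝ) hv0')
  have hWW : Wᵀ * W = 1 := (mem_orthogonalGroup_iff' (Fin 3) ℝ).mp hW.1
  have hRW : R *ᵥ W.col 2 = W.col 2 := by
    simp [hWcol, mulVec_smul, hv]
  have hcol : (Wᵀ * R * W).col 2 = Pi.single 2 1 := by
    rw [← mulVec_single_one, ← mulVec_mulVec, ← mulVec_mulVec, mulVec_single_one W, hRW,
      ← mulVec_single_one, mulVec_mulVec, hWW, one_mulVec]
  obtain ⟨α, hα⟩ := exists_eq_rotZ_of_col_two
    (mul_mem (mul_mem (transpose_mem_specialOrthogonalGroup hW) hR) hW) hcol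
  refine ⟨Int.fract (α / (2 * π)), ⟨Int.fract_nonneg _, Int.fract_lt_one _⟩, W, hW, ?_⟩
  rw [Int.fract, mul_sub, mul_div_cancel₀ _ (by positivity), mul_comm (2 * π),
    rotZ_sub_int_mul_two_pi, ← hα]
  have hWW' : W * Wᵀ = 1 := mul_eq_one_comm.mp hWW
  rw [← mul_assoc, ← mul_assoc, hWW', one_mul, mul_assoc, hWW', mul_one]

/-- Floquet theorem for spin motion on the closed orbit. -/
theorem floquet_closed_orbit
    (A : ℝ → Matrix (Fin 3) (Fin 3) ℝ)
    (hAsmooth : ∀ i j, ContDiff ℝ 1 fun θ => A θ i j)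
    (hAskew : ∀ θ, (A θ).transpose = -(A θ))
    (hAper : ∀ θ, A (θ + 2 * Real.pi) = A θ)
    (Φ : ℝ → Matrix (Fin 3) (Fin 3) ℝ)
    (hΦ0 : Φ 0 = 1)
    (hΦ : ∀ (θ : ℝ) (i j : Fin 3), HasDerivAt (fun t => Φ t i j) ((A θ * Φ θ) i j) θ) :
    ∃ ν ∈ Set.Ico (0 : ℝ) 1, ∃ W ∈ SO3, ∃ p : ℝ → Matrix (Fin 3) (Fin 3) ℝ,
      (∀ i j, ContDiff ℝ 1 fun θ => p θ i j) ∧ (∀ θ, p θ ∈ SO3) ∧ p 0 = 1 ∧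
      (∀ θ, p (θ + 2 * Real.pi) = p θ) ∧
      (∀ θ, Φ θ = p θ * W * NormedSpace.exp ((ν * θ) • Jmat) * W.transpose) ∧
      spectrum ℂ ((Φ (2 * Real.pi)).map (fun x : ℝ => (x : ℂ))) =
        {Complex.exp (2 * Real.pi * Complex.I * ν),
         Complex.exp (-(2 * Real.pi * Complex.I * ν)), 1} := by
  rw [SO3_eq_specialOrthogonalGroup]
  have hSO := mem_specialOrthogonalGroup_of_skew hAskew hΦ hΦ0
  obtain ⟨ν, hν, W, hW, hmonodromy⟩ := exists_eq_conj_rotZ (hSO (2 * π))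
  have hWW : W * Wᵀ = 1 := (mem_orthogonalGroup_iff (Fin 3) ℝ).mp hW.1
  have hconj := conj_rotZ_mul_conj_rotZ ((mem_orthogonalGroup_iff' (Fin 3) ℝ).mp hW.1)
  refine ⟨ν, hν, W, hW, fun θ => Φ θ * (W * rotZ (-(ν * θ)) * Wᵀ), ?_, fun θ => ?_, ?_,
    fun θ => ?_, fun θ => ?_, ?_⟩
  · have hrot i j : ContDiff ℝ 1 fun θ => rotZ (-(ν * θ)) i j :=
      ((contDiff_rotZ_apply i j).of_le le_top).comp (contDiff_const.mul contDiff_id).neg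
    exact contDiff_mul_apply (contDiff_one_apply_of_hasDerivAt
      (fun i j => (hAsmooth i j).continuous) hΦ) (contDiff_mul_apply
        (contDiff_mul_apply (fun _ _ => contDiff_const) hrot) fun _ _ => contDiff_const)
  · exact mul_mem (hSO θ) (mul_mem (mul_mem hW (rotZ_mem_specialOrthogonalGroup _))
      (transpose_mem_specialOrthogonalGroup hW))
  · simp [hΦ0, rotZ_zero, hWW]
  · dsimp only
    rw [apply_add_eq_mul_of_skew hAskew hAper hΦ hΦ0, hmonodromy, mul_assoc, hconj,
      show 2 * π * ν + -(ν * (θ + 2 * π)) = -(ν * θ) by ring]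
  · calc Φ θ = Φ θ * (W * rotZ (-(ν * θ) + ν * θ) * Wᵀ) := by
          rw [neg_add_cancel, rotZ_zero, mul_one, hWW, mul_one]
      _ = _ := by
          rw [← hconj, exp_smul_Jmat]
          simp only [mul_assoc]
  · rw [hmonodromy, spectrum_map_conj_of_mem_orthogonalGroup hW.1, spectrum_map_rotZ]
    push_cast
    ring_nf
end
end

section
/- If f : ℝ → ℝ is quasiperiodic with tune vector ν ∈ ℝ^k, then there exist an integer k̂ with 1 ≤ k̂ ≤ k and a nonresonant vector ν̂ ∈ ℝ^{k̂} such that f is quasiperiodic with tune vector ν̂. -/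
open MeasureTheory Filter
noncomputable section

/-! The ℤ-span of `ν₁, …, ν_k` in `ℝ` is finitely generated and torsion-free, hence free of
rank `r ≤ k`; a ℤ-basis `ν̂` of it is exactly a nonresonant vector. Writing `ν = N ν̂` with an
integer matrix `N`, the function `w ↦ F (N w)` is again `2π`-periodic in each argument, since
integer combinations of periods of `F` are periods, and it produces `f` from `ν̂`. When `ν = 0`
the rank is `0`, `f` is constant and `ν̂ = (1)` does the job. -/

theorem exists_linearIndependent_int_combination {V ι : Type*} [AddCommGroup V]
    [IsAddTorsionFree V] [Fintype ι] (v : ι → V) :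
    ∃ r ≤ Fintype.card ι, ∃ w : Fin r → V, LinearIndependent ℤ w ∧
      ∃ N : ι → Fin r → ℤ, ∀ i, v i = ∑ j, N i j • w j := by
  have := Module.Finite.span_of_finite ℤ (Set.finite_range v)
  let b := Module.finBasis ℤ (Submodule.span ℤ (Set.range v))
  have hv (i : ι) : v i ∈ Submodule.span ℤ (Set.range v) := Submodule.subset_span ⟨i, rfl⟩
  refine ⟨_, finrank_range_le_card v, fun j => b j,
    b.linearIndependent.map' _ (Submodule.ker_subtype _), fun i j => b.repr ⟨v i, hv i⟩ j,
    fun i => ?_⟩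
  have h := congrArg Subtype.val (b.sum_repr ⟨v i, hv i⟩)
  simp only [Submodule.coe_sum, Submodule.coe_smul] at h
  exact h.symm

theorem nonresonant_iff_linearIndependent {k : ℕ} {ν : Fin k → ℝ} :
    Nonresonant ν ↔ LinearIndependent ℤ ν := by
  simp only [Nonresonant, zdot, Fintype.linearIndependent_iff, funext_iff, zsmul_eq_mul,
    Pi.zero_apply]

def periodSubgroup {V E : Type*} [AddCommGroup V] (F : V → E) : AddSubgroup V where
  carrier := {v | ∀ z, F (z + v) = F z}
  zero_mem' z := by rw [add_zero]
  add_mem' {a b} ha hb z := by rw [← add_assoc, hb, ha]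
  neg_mem' {a} ha z := by rw [← ha (z + -a), neg_add_cancel_right]

theorem periodic2Pi_iff_single_mem_periodSubgroup {k : ℕ} {E : Type*}
    {F : (Fin k → ℝ) → E} :
    Periodic2Pi F ↔ ∀ i, Pi.single i (2 * Real.pi) ∈ periodSubgroup F := by
  have h (z : Fin k → ℝ) (i : Fin k) :
      Function.update z i (z i + 2 * Real.pi) = z + Pi.single i (2 * Real.pi) := by
    ext j; by_cases hj : j = i <;> simp [hj]
  simp only [Periodic2Pi, h]
  exact forall_comm

theorem Periodic2Pi.int_mul_mem_periodSubgroup {k : ℕ} {E : Type*} {F : (Fin k → ℝ) → E}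
    (hF : Periodic2Pi F) (c : Fin k → ℤ) :
    (fun i => (c i : ℝ) * (2 * Real.pi)) ∈ periodSubgroup F := by
  have h : (fun i => (c i : ℝ) * (2 * Real.pi)) = ∑ i, c i • Pi.single i (2 * Real.pi) := by
    rw [← Finset.univ_sum_single (fun i => (c i : ℝ) * (2 * Real.pi))]
    simp_rw [← Pi.single_smul', zsmul_eq_mul]
  rw [h]
  exact sum_mem fun i _ =>
    zsmul_mem (periodic2Pi_iff_single_mem_periodSubgroup.mp hF i) _

namespace IsQuasiperiodic

variable {E : Type*} [TopologicalSpace E] {k r : ℕ} {f : ℝ → E}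

theorem of_eq_int_combination {ν : Fin k → ℝ} (hf : IsQuasiperiodic ν f) {μ : Fin r → ℝ}
    (N : Fin k → Fin r → ℤ) (hN : ∀ i, ν i = ∑ j, N i j • μ j) : IsQuasiperiodic μ f := by
  obtain ⟨F, hFc, hFp, hfF⟩ := hf
  let A : Matrix (Fin k) (Fin r) ℝ := Matrix.of fun i j => (N i j : ℝ)
  refine ⟨fun w => F (A.mulVec w),
    hFc.comp (Continuous.matrix_mulVec continuous_const continuous_id),
    periodic2Pi_iff_single_mem_periodSubgroup.mpr fun j w => ?_, fun θ => ?_⟩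
  · have hA : A.mulVec (Pi.single j (2 * Real.pi)) = fun i => (N i j : ℝ) * (2 * Real.pi) := by
      ext i; simp [A, Matrix.mulVec]
    change F (A.mulVec (w + _)) = F (A.mulVec w)
    rw [Matrix.mulVec_add, hA]
    exact hFp.int_mul_mem_periodSubgroup (fun i => N i j) _
  · rw [hfF]
    congr 1
    ext i
    simp only [hN, Matrix.mulVec, dotProduct, A, Matrix.of_apply, zsmul_eq_mul, Finset.sum_mul,
      mul_assoc]

theorem of_fin_zero {ν : Fin 0 → ℝ} (hf : IsQuasiperiodic ν f) (μ : Fin k → ℝ) :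
    IsQuasiperiodic μ f := by
  obtain ⟨F, -, -, hfF⟩ := hf
  exact ⟨fun _ => F 0, continuous_const, fun _ _ => rfl,
    fun θ => (hfF θ).trans (congrArg F (Subsingleton.elim _ _))⟩

end IsQuasiperiodic

/-- Lemma 4.2. -/
theorem quasiperiodic_tune_reduction {k : ℕ} (hk : 1 ≤ k) (ν : Fin k → ℝ) (f : ℝ → ℝ)
    (hf : IsQuasiperiodic ν f) :
    ∃ khat : ℕ, 1 ≤ khat ∧ khat ≤ k ∧ ∃ νhat : Fin khat → ℝ,
      Nonresonant νhat ∧ IsQuasiperiodic νhat f := by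
  obtain ⟨r, hrk, μ, hμ, N, hN⟩ := exists_linearIndependent_int_combination ν
  have hfμ : IsQuasiperiodic μ f := hf.of_eq_int_combination N hN
  rcases Nat.eq_zero_or_pos r with rfl | hr
  · refine ⟨1, le_rfl, hk, ![1], nonresonant_iff_linearIndependent.mpr ?_, hfμ.of_fin_zero _⟩
    exact linearIndependent_unique_iff.mpr one_ne_zero
  · exact ⟨r, hr, by simpa using hrk, μ, nonresonant_iff_linearIndependent.mpr hμ, hfμ⟩
end
end

section
/- Let f : ℝ → ℂ be quasiperiodic with tune vector ν ∈ ℝ^k. Then for every λ ∈ ℝ the limit a(f,λ) := lim_{T→∞} (1/T) ∫₀^T f(θ) e^{−iλθ} dθ exists. -/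
open MeasureTheory Filter
noncomputable section

/-!
`f` is the restriction of a continuous function on the torus `ℝᵏ / (2πℤ)ᵏ` to the
orbit `θ ↦ νθ`. By Stone–Weierstrass on the torus, `f`, and with it `f(θ) e^{-iλθ}`,
is a uniform limit of trigonometric polynomials `∑ aⱼ e^{i cⱼ θ}`. Each exponential
has a mean value (`1` if `c = 0`, and `0` otherwise, since `∫₀ᵀ e^{icθ} dθ` stays
bounded), and mean values survive uniform limits because
`|T⁻¹ ∫₀ᵀ (g - h)| ≤ sup |g - h|`.
-/

open Complex Topology
open scoped Real

theorem exists_tendsto_of_forall_eventually_dist_le {α ι : Type*} [PseudoMetricSpace α]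
    [CompleteSpace α] [Nonempty ι] [SemilatticeSup ι] {u : ι → α}
    (h : ∀ ε > 0, ∃ v : ι → α, (∃ L, Tendsto v atTop (𝓝 L)) ∧
      ∀ᶠ x in atTop, dist (u x) (v x) ≤ ε) :
    ∃ L, Tendsto u atTop (𝓝 L) := by
  refine cauchySeq_tendsto_of_complete (Metric.cauchySeq_iff.mpr fun ε hε => ?_)
  obtain ⟨v, ⟨L, hv⟩, huv⟩ := h (ε / 4) (by positivity)
  obtain ⟨N₁, hN₁⟩ := Metric.cauchySeq_iff.mp hv.cauchySeq (ε / 4) (by positivity)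
  obtain ⟨N₂, hN₂⟩ := eventually_atTop.mp huv
  refine ⟨N₁ ⊔ N₂, fun m hm n hn => ?_⟩
  have h₁ := hN₁ m (le_sup_left.trans hm) n (le_sup_left.trans hn)
  have h₂ := hN₂ m (le_sup_right.trans hm)
  have h₃ := hN₂ n (le_sup_right.trans hn)
  calc dist (u m) (u n) ≤ dist (u m) (v m) + dist (v m) (v n) + dist (v n) (u n) :=
        dist_triangle4 _ _ _ _
    _ < ε := by rw [dist_comm (v n)]; linarith

section MeanValue

def runningMean (g : ℝ → ℂ) (T : ℝ) : ℂ := (1 / (T : ℂ)) * ∫ θ in (0 : ℝ)..T, g θ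

def HasMeanValue (g : ℝ → ℂ) : Prop := ∃ L, Tendsto (runningMean g) atTop (𝓝 L)

variable {f g : ℝ → ℂ}

lemma runningMean_add {T : ℝ} (hf : IntervalIntegrable f volume 0 T)
    (hg : IntervalIntegrable g volume 0 T) :
    runningMean (f + g) T = runningMean f T + runningMean g T := by
  simp only [runningMean, Pi.add_apply, intervalIntegral.integral_add hf hg, mul_add]

lemma runningMean_sub {T : ℝ} (hf : IntervalIntegrable f volume 0 T)
    (hg : IntervalIntegrable g volume 0 T) :
    runningMean (f - g) T = runningMean f T - runningMean g T := by
  simp only [runningMean, Pi.sub_apply, intervalIntegral.integral_sub hf hg, mul_sub]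

lemma runningMean_smul (c : ℂ) (T : ℝ) : runningMean (c • f) T = c * runningMean f T := by
  simp only [runningMean, Pi.smul_apply, smul_eq_mul, intervalIntegral.integral_const_mul]
  ring

lemma norm_runningMean {T : ℝ} (hT : 0 < T) :
    ‖runningMean g T‖ = ‖∫ θ in (0 : ℝ)..T, g θ‖ / T := by
  rw [runningMean, norm_mul, norm_div, norm_one, norm_real, Real.norm_of_nonneg hT.le,
    one_div_mul_eq_div]

lemma norm_runningMean_le {T C : ℝ} (hT : 0 < T) (h : ∀ θ, ‖g θ‖ ≤ C) :
    ‖runningMean g T‖ ≤ C := by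
  rw [norm_runningMean hT, div_le_iff₀ hT]
  simpa [abs_of_pos hT] using
    intervalIntegral.norm_integral_le_of_norm_le_const (a := 0) (b := T) fun θ _ => h θ

lemma HasMeanValue.add (hf : HasMeanValue f) (hg : HasMeanValue g) (hfc : Continuous f)
    (hgc : Continuous g) : HasMeanValue (f + g) := by
  obtain ⟨L, hL⟩ := hf
  obtain ⟨M, hM⟩ := hg
  refine ⟨L + M, (hL.add hM).congr fun T => ?_⟩
  rw [runningMean_add (hfc.intervalIntegrable _ _) (hgc.intervalIntegrable _ _)]

lemma HasMeanValue.smul (hf : HasMeanValue f) (c : ℂ) : HasMeanValue (c • f) := by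
  obtain ⟨L, hL⟩ := hf
  exact ⟨c * L, (hL.const_mul c).congr fun T => (runningMean_smul c T).symm⟩

lemma hasMeanValue_zero : HasMeanValue 0 :=
  ⟨0, tendsto_const_nhds.congr fun T => by simp [runningMean]⟩

lemma hasMeanValue_exp_mul_I (c : ℝ) : HasMeanValue fun θ => cexp (c * θ * I) := by
  rcases eq_or_ne c 0 with rfl | hc
  · refine ⟨1, tendsto_const_nhds.congr' ?_⟩
    filter_upwards [eventually_gt_atTop 0] with T hT
    simp [runningMean, hT.ne']
  have hcI : (c : ℂ) * I ≠ 0 := mul_ne_zero (ofReal_ne_zero.mpr hc) I_ne_zero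
  have hint : ∀ T : ℝ, ‖∫ θ in (0 : ℝ)..T, cexp (c * θ * I)‖ ≤ 2 / |c| := by
    intro T
    have h := integral_exp_mul_complex (a := 0) (b := T) hcI
    simp only [ofReal_zero, mul_zero, exp_zero] at h
    simp_rw [mul_right_comm _ _ I, h, norm_div, norm_mul, norm_I, norm_real, Real.norm_eq_abs,
      mul_one]
    gcongr
    calc ‖cexp (c * I * T) - 1‖ ≤ ‖cexp (c * I * T)‖ + ‖(1 : ℂ)‖ := norm_sub_le _ _
      _ = 2 := by
        rw [mul_right_comm, ← ofReal_mul, norm_exp_ofReal_mul_I, norm_one]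
        norm_num
  refine ⟨0, squeeze_zero_norm' (a := fun T => 2 / |c| / T) ?_ ?_⟩
  · filter_upwards [eventually_gt_atTop 0] with T hT
    rw [norm_runningMean hT]
    exact div_le_div_of_nonneg_right (hint T) hT.le
  · exact tendsto_const_nhds.div_atTop tendsto_id

theorem HasMeanValue.of_forall_approx (hg : Continuous g)
    (h : ∀ ε > 0, ∃ p, Continuous p ∧ HasMeanValue p ∧ ∀ θ, ‖g θ - p θ‖ ≤ ε) :
    HasMeanValue g := by
  refine exists_tendsto_of_forall_eventually_dist_le fun ε hε => ?_
  obtain ⟨p, hpc, hp, hgp⟩ := h ε hε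
  refine ⟨runningMean p, hp, ?_⟩
  filter_upwards [eventually_gt_atTop 0] with T hT
  rw [dist_eq_norm, ← runningMean_sub (hg.intervalIntegrable _ _) (hpc.intervalIntegrable _ _)]
  exact norm_runningMean_le hT hgp

end MeanValue

section TrigPolynomials

def trigPolynomials : Submodule ℂ (ℝ → ℂ) :=
  Submodule.span ℂ (Set.range fun c : ℝ => fun θ : ℝ => cexp (c * θ * I))

lemma exp_mul_I_mem_trigPolynomials (c : ℝ) :
    (fun θ : ℝ => cexp (c * θ * I)) ∈ trigPolynomials :=
  Submodule.subset_span ⟨c, rfl⟩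

variable {p : ℝ → ℂ}

lemma continuous_of_mem_trigPolynomials (hp : p ∈ trigPolynomials) : Continuous p := by
  induction hp using Submodule.span_induction with
  | mem _ h => obtain ⟨c, rfl⟩ := h; fun_prop
  | zero => exact continuous_const
  | add _ _ _ _ hf hg => exact hf.add hg
  | smul a _ _ hf => exact hf.const_smul a

lemma hasMeanValue_of_mem_trigPolynomials (hp : p ∈ trigPolynomials) : HasMeanValue p := by
  induction hp using Submodule.span_induction with
  | mem _ h => obtain ⟨c, rfl⟩ := h; exact hasMeanValue_exp_mul_I c
  | zero => exact hasMeanValue_zero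
  | add f g hf hg hfm hgm =>
    exact hfm.add hgm (continuous_of_mem_trigPolynomials hf) (continuous_of_mem_trigPolynomials hg)
  | smul a _ _ hf => exact hf.smul a

lemma mul_exp_mul_I_mem_trigPolynomials (hp : p ∈ trigPolynomials) (c : ℝ) :
    (p * fun θ : ℝ => cexp (c * θ * I)) ∈ trigPolynomials := by
  suffices trigPolynomials ≤
      trigPolynomials.comap (LinearMap.mulRight ℂ fun θ : ℝ => cexp (c * θ * I)) from this hp
  refine Submodule.span_le.mpr ?_
  rintro _ ⟨a, rfl⟩
  rw [SetLike.mem_coe, Submodule.mem_comap, LinearMap.mulRight_apply]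
  convert exp_mul_I_mem_trigPolynomials (a + c) using 1
  ext θ
  simp only [Pi.mul_apply, ← exp_add]
  push_cast
  ring_nf

end TrigPolynomials

section Torus

open UnitAddTorus

theorem exists_continuousMap_unitAddTorus_comp_eq {ι E : Type*} [Fintype ι] [DecidableEq ι]
    [TopologicalSpace E] {F : (ι → ℝ) → E} (hF : Continuous F)
    (hper : ∀ x i, F (x + Pi.single i 1) = F x) :
    ∃ G : C(UnitAddTorus ι, E), ∀ x : ι → ℝ, G (fun i => x i) = F x := by
  have hproj := (IsOpenQuotientMap.piMap fun (_ : ι) =>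
    QuotientAddGroup.isOpenQuotientMap_mk (N := AddSubgroup.zmultiples (1 : ℝ)))
  let proj : C(ι → ℝ, UnitAddTorus ι) := ⟨_, hproj.continuous⟩
  let periods : AddSubgroup (ι → ℝ) :=
    { carrier := {v | ∀ x, F (x + v) = F x}
      zero_mem' := fun x => by rw [add_zero]
      add_mem' := fun ha hb x => by rw [← add_assoc, hb, ha]
      neg_mem' := fun {v} hv x => by rw [← hv (x + -v), neg_add_cancel_right] }
  have hfactor : Function.FactorsThrough F proj := by
    intro x y hxy
    have hn : ∀ i, ∃ n : ℤ, n • (1 : ℝ) = y i - x i := fun i =>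
      AddSubgroup.mem_zmultiples_iff.mp (QuotientAddGroup.eq_iff_sub_mem.mp (congrFun hxy i).symm)
    choose n hn using hn
    have hyx : y - x ∈ periods := by
      rw [← Finset.univ_sum_single (y - x)]
      refine AddSubgroup.sum_mem _ fun i _ => ?_
      rw [Pi.sub_apply, ← hn i, Pi.single_smul']
      exact AddSubgroup.zsmul_mem _ (show Pi.single i 1 ∈ periods from (hper · i)) _
    rw [← hyx x, add_sub_cancel]
  exact ⟨hproj.isQuotientMap.lift (f := proj) ⟨F, hF⟩ hfactor,
    DFunLike.congr_fun (hproj.isQuotientMap.lift_comp (f := proj) ⟨F, hF⟩ hfactor)⟩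

lemma mFourier_apply_coe {ι : Type*} [Fintype ι] (n : ι → ℤ) (x : ι → ℝ) :
    mFourier n (fun i => (x i : UnitAddCircle)) = cexp (2 * π * I * ∑ i, (n i : ℂ) * x i) := by
  simp only [mFourier, ContinuousMap.coe_mk, fourier_coe_apply, ofReal_one, div_one, ← exp_sum,
    Finset.mul_sum, mul_assoc]

end Torus

section Quasiperiodic

variable {k : ℕ} {ν : Fin k → ℝ}

lemma IsQuasiperiodic.continuous {E : Type*} [TopologicalSpace E] {f : ℝ → E}
    (hf : IsQuasiperiodic ν f) : Continuous f := by
  obtain ⟨F, hFc, -, hfF⟩ := hf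
  rw [funext hfF]
  fun_prop

lemma Periodic2Pi.add_single {E : Type*} {F : (Fin k → ℝ) → E} (hF : Periodic2Pi F)
    (z : Fin k → ℝ) (i : Fin k) : F (z + Pi.single i (2 * π)) = F z := by
  convert hF z i using 2
  ext j
  rcases eq_or_ne j i with rfl | hj <;> simp [*]

theorem IsQuasiperiodic.exists_mem_trigPolynomials_norm_sub_lt {f : ℝ → ℂ}
    (hf : IsQuasiperiodic ν f) {ε : ℝ} (hε : 0 < ε) :
    ∃ p ∈ trigPolynomials, ∀ θ, ‖f θ - p θ‖ < ε := by
  obtain ⟨F, hFc, hFper, hfF⟩ := hf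
  obtain ⟨G, hG⟩ := exists_continuousMap_unitAddTorus_comp_eq
    (F := fun y => F ((2 * π) • y)) (by fun_prop) fun y i => by
      rw [smul_add, ← Pi.single_smul', smul_eq_mul, mul_one, hFper.add_single]
  have hG_mem :
      G ∈ (Submodule.span ℂ (Set.range UnitAddTorus.mFourier)).topologicalClosure := by
    rw [UnitAddTorus.span_mFourier_closure_eq_top]
    trivial
  obtain ⟨P, hP, hGP⟩ := Metric.mem_closure_iff.mp hG_mem ε hε
  -- `θ ↦ νθ` on the torus, rescaled from period `2π` to period `1`
  let orbit : ℝ → UnitAddTorus (Fin k) := fun θ i => ((ν i * θ / (2 * π) : ℝ) : UnitAddCircle)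
  let restrict := (LinearMap.funLeft ℂ ℂ orbit).comp (ContinuousMap.coeFnLinearMap ℂ)
  have hf_orbit : ∀ θ, f θ = G (orbit θ) := fun θ => by
    rw [hfF, hG]
    congr 1
    ext i
    simp only [Pi.smul_apply, smul_eq_mul]
    field_simp
  refine ⟨restrict P, ?_, fun θ => ?_⟩
  · refine (Submodule.span_le (p := trigPolynomials.comap restrict)).mpr ?_ hP
    rintro _ ⟨n, rfl⟩
    rw [SetLike.mem_coe, Submodule.mem_comap]
    convert exp_mul_I_mem_trigPolynomials (∑ i, n i * ν i) using 1
    ext θ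
    change UnitAddTorus.mFourier n (fun i => ((ν i * θ / (2 * π) : ℝ) : UnitAddCircle)) = _
    rw [mFourier_apply_coe]
    push_cast
    congr 1
    rw [Finset.mul_sum, Finset.sum_mul, Finset.sum_mul]
    refine Finset.sum_congr rfl fun i _ => ?_
    field_simp
  · rw [hf_orbit, ← dist_eq_norm]
    exact (ContinuousMap.dist_apply_le_dist _).trans_lt hGP

end Quasiperiodic

/-- Lemma 4.3d. -/
theorem quasiperiodic_average_exists {k : ℕ} (ν : Fin k → ℝ) (f : ℝ → ℂ)
    (hf : IsQuasiperiodic ν f) (lam : ℝ) :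
    ∃ L : ℂ, Tendsto (fun T : ℝ => (1 / (T : ℂ)) *
        ∫ θ in (0:ℝ)..T, f θ * Complex.exp (-(Complex.I * lam * θ)))
      atTop (nhds L) := by
  let e : ℝ → ℂ := fun θ => cexp (↑(-lam) * θ * I)
  have hfe : (fun θ => f θ * cexp (-(I * lam * θ))) = f * e := by
    ext θ
    simp only [e, Pi.mul_apply, ofReal_neg]
    ring_nf
  suffices HasMeanValue (f * e) by rwa [← hfe] at this
  refine HasMeanValue.of_forall_approx (hf.continuous.mul (by fun_prop)) fun ε hε => ?_
  obtain ⟨p, hp, hfp⟩ := hf.exists_mem_trigPolynomials_norm_sub_lt hε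
  have hpe := mul_exp_mul_I_mem_trigPolynomials hp (-lam)
  refine ⟨p * e, continuous_of_mem_trigPolynomials hpe, hasMeanValue_of_mem_trigPolynomials hpe,
    fun θ => ?_⟩
  have he : ‖e θ‖ = 1 := by simp only [e, ← ofReal_mul, norm_exp_ofReal_mul_I]
  rw [Pi.mul_apply, Pi.mul_apply, ← sub_mul, norm_mul, he, mul_one]
  exact (hfp θ).le
end
end

section
/- Let c₀ ∈ ℝ be such that the function θ ↦ exp(i c₀ θ) is quasiperiodic with tune vector ν ∈ ℝ^k (k ≥ 1). Then there exists n ∈ ℤ^k such that c₀ = n·ν. Moreover, if ν is nonresonant then n is unique. -/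
open MeasureTheory Filter
noncomputable section

/-! Descend `F` to a continuous function on the torus `(ℝ/2πℤ)^k`. By Stone–Weierstrass it is
uniformly within `1/2` of a trigonometric polynomial, and along the orbit `θ ↦ νθ` the monomial
`e^{i m·z}` becomes `e^{i (m·ν) θ}`. If `c₀` differed from every `m·ν`, dividing by `e^{i c₀ θ}`
would give `‖1 - ∑ c_m e^{i (m·ν - c₀) θ}‖ ≤ 1/2` for all `θ`; but the integral over `[0, T]` of the
sum stays bounded while that of `1` is `T`. -/

open Complex Real

section Periodicity

variable {k : ℕ} {E : Type*} {F : (Fin k → ℝ) → E}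

theorem Periodic2Pi.periodic_single (hF : Periodic2Pi F) (i : Fin k) :
    Function.Periodic F (Pi.single i (2 * π)) := by
  intro z
  rw [← hF z i]
  congr 1
  ext j
  by_cases hj : j = i
  · subst hj; simp
  · simp [hj]

theorem Periodic2Pi.periodic_intVec (hF : Periodic2Pi F) (n : Fin k → ℤ) :
    Function.Periodic F (fun i => 2 * π * n i) := by
  classical
  rw [← Finset.univ_sum_single (fun i => 2 * π * n i)]
  refine Finset.sum_induction _ (Function.Periodic F) (fun _ _ ha hb => ha.add_period hb)
    (Function.periodic_with_period_zero F) fun i _ => ?_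
  rw [mul_comm, ← zsmul_eq_mul, Pi.single_smul']
  exact (hF.periodic_single i).zsmul (n i)

theorem Periodic2Pi.exists_unitAddTorus_lift [TopologicalSpace E] (hFc : Continuous F)
    (hF : Periodic2Pi F) :
    ∃ G : C(UnitAddTorus (Fin k), E),
      ∀ z, G (fun i => ((z i / (2 * π) : ℝ) : UnitAddCircle)) = F z := by
  let q : C(Fin k → ℝ, UnitAddTorus (Fin k)) := ⟨fun z i => (z i : UnitAddCircle), by fun_prop⟩
  have hq : Topology.IsQuotientMap q :=
    (IsOpenQuotientMap.piMap fun _ => QuotientAddGroup.isOpenQuotientMap_mk).isQuotientMap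
  let g : C(Fin k → ℝ, E) := ⟨fun z => F (fun i => 2 * π * z i), by fun_prop⟩
  have hg : Function.FactorsThrough g q := by
    intro z w hzw
    have : ∀ i, ∃ n : ℤ, w i = z i + n := fun i => by
      obtain ⟨n, hn⟩ :=
        AddSubgroup.mem_zmultiples_iff.mp (QuotientAddGroup.eq.mp (congrFun hzw i))
      exact ⟨n, by rw [zsmul_one] at hn; linarith⟩
    choose n hn using this
    simp only [g, ContinuousMap.coe_mk, hn, mul_add]
    exact (hF.periodic_intVec n (fun i => 2 * π * z i)).symm
  refine ⟨hq.lift g hg, fun z => ?_⟩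
  refine (DFunLike.congr_fun (hq.lift_comp g hg) (fun i => z i / (2 * π))).trans ?_
  simp only [g, ContinuousMap.coe_mk, mul_div_cancel₀ _ two_pi_pos.ne']

end Periodicity

theorem UnitAddTorus.mFourier_apply_orbit {k : ℕ} (m : Fin k → ℤ) (ν : Fin k → ℝ) (θ : ℝ) :
    mFourier m (fun i => ((ν i * θ / (2 * π) : ℝ) : UnitAddCircle)) =
      exp (I * zdot m ν * θ) := by
  simp only [mFourier, ContinuousMap.coe_mk, fourier_coe_apply, ← Complex.exp_sum, zdot]
  congr 1
  push_cast
  rw [Finset.mul_sum, Finset.sum_mul]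
  refine Finset.sum_congr rfl fun i _ => ?_
  field_simp

theorem IsQuasiperiodic.exists_expSum_approx {k : ℕ} {ν : Fin k → ℝ} {f : ℝ → ℂ}
    (h : IsQuasiperiodic ν f) {ε : ℝ} (hε : 0 < ε) :
    ∃ (s : Finset (Fin k → ℤ)) (c : (Fin k → ℤ) → ℂ),
      ∀ θ : ℝ, ‖f θ - ∑ m ∈ s, c m * exp (I * zdot m ν * θ)‖ < ε := by
  obtain ⟨F, hFc, hFp, hfF⟩ := h
  obtain ⟨G, hG⟩ := hFp.exists_unitAddTorus_lift hFc
  have hGmem : G ∈ closure (Submodule.span ℂ (Set.range (UnitAddTorus.mFourier (d := Fin k))) :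
      Set C(UnitAddTorus (Fin k), ℂ)) := by
    rw [← Submodule.topologicalClosure_coe, UnitAddTorus.span_mFourier_closure_eq_top]
    trivial
  obtain ⟨P, hP, hGP⟩ := Metric.mem_closure_iff.mp hGmem ε hε
  obtain ⟨c, rfl⟩ := Finsupp.mem_span_range_iff_exists_finsupp.mp hP
  refine ⟨c.support, c, fun θ => ?_⟩
  have := (ContinuousMap.dist_apply_le_dist
    (fun i => ((ν i * θ / (2 * π) : ℝ) : UnitAddCircle))).trans_lt hGP
  rw [hG, dist_eq_norm] at this
  simpa [← hfF, Finsupp.sum, UnitAddTorus.mFourier_apply_orbit] using this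

theorem norm_intervalIntegral_exp_I_mul_le {ξ : ℝ} (hξ : ξ ≠ 0) (T : ℝ) :
    ‖∫ θ in (0 : ℝ)..T, exp (I * ξ * θ)‖ ≤ 2 / |ξ| := by
  have hIξ : I * ξ ≠ 0 := mul_ne_zero I_ne_zero (ofReal_ne_zero.mpr hξ)
  rw [integral_exp_mul_complex hIξ, norm_div, norm_mul, norm_I, one_mul, norm_real,
    Real.norm_eq_abs, ofReal_zero, mul_zero, Complex.exp_zero]
  gcongr
  calc ‖exp (I * ξ * T) - 1‖ ≤ ‖exp (I * ξ * T)‖ + ‖(1 : ℂ)‖ := norm_sub_le _ _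
    _ = 2 := by rw [mul_assoc, ← ofReal_mul, norm_exp_I_mul_ofReal, norm_one]; norm_num

theorem exists_norm_intervalIntegral_expSum_le {ι : Type*} (s : Finset ι) (c : ι → ℂ)
    (ξ : ι → ℝ) (hξ : ∀ i ∈ s, ξ i ≠ 0) :
    ∃ C, ∀ T : ℝ, ‖∫ θ in (0 : ℝ)..T, ∑ i ∈ s, c i * exp (I * ξ i * θ)‖ ≤ C := by
  refine ⟨∑ i ∈ s, ‖c i‖ * (2 / |ξ i|), fun T => ?_⟩
  rw [intervalIntegral.integral_finsetSum fun i _ => by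
    apply Continuous.intervalIntegrable; fun_prop]
  refine (norm_sum_le _ _).trans (Finset.sum_le_sum fun i hi => ?_)
  rw [intervalIntegral.integral_const_mul, norm_mul]
  exact mul_le_mul_of_nonneg_left (norm_intervalIntegral_exp_I_mul_le (hξ i hi) T) (norm_nonneg _)

theorem one_le_of_forall_norm_one_sub_expSum_le {ι : Type*} (s : Finset ι) (c : ι → ℂ)
    (ξ : ι → ℝ) (hξ : ∀ i ∈ s, ξ i ≠ 0) {ε : ℝ}
    (h : ∀ θ : ℝ, ‖1 - ∑ i ∈ s, c i * exp (I * ξ i * θ)‖ ≤ ε) : 1 ≤ ε := by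
  obtain ⟨C, hC⟩ := exists_norm_intervalIntegral_expSum_le s c ξ hξ
  have hC0 : 0 ≤ C := (norm_nonneg _).trans (hC 0)
  by_contra! hε
  set T := (C + 1) / (1 - ε) with hT
  have hT0 : 0 < T := div_pos (by linarith) (by linarith)
  have hTle : T ≤ ε * T + C := by
    have hint : ∫ θ in (0 : ℝ)..T, (1 - ∑ i ∈ s, c i * exp (I * ξ i * θ)) =
        T - ∫ θ in (0 : ℝ)..T, ∑ i ∈ s, c i * exp (I * ξ i * θ) := by
      rw [intervalIntegral.integral_sub intervalIntegrable_const
        (by apply Continuous.intervalIntegrable; fun_prop)]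
      simp
    calc T = ‖(T : ℂ)‖ := by rw [norm_real, Real.norm_of_nonneg hT0.le]
      _ ≤ ‖∫ θ in (0 : ℝ)..T, (1 - ∑ i ∈ s, c i * exp (I * ξ i * θ))‖ +
          ‖∫ θ in (0 : ℝ)..T, ∑ i ∈ s, c i * exp (I * ξ i * θ)‖ := by
        rw [hint]; exact norm_le_norm_sub_add _ _
      _ ≤ ε * |T - 0| + C :=
        add_le_add (intervalIntegral.norm_integral_le_of_norm_le_const fun θ _ => h θ) (hC T)
      _ = ε * T + C := by rw [sub_zero, abs_of_pos hT0]
  have : (1 - ε) * T = C + 1 := by rw [hT]; field_simp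
  nlinarith

theorem norm_exp_sub_expSum_eq {ι : Type*} (s : Finset ι) (c : ι → ℂ) (ξ : ι → ℝ) (c0 θ : ℝ) :
    ‖exp (I * c0 * θ) - ∑ i ∈ s, c i * exp (I * ξ i * θ)‖ =
      ‖1 - ∑ i ∈ s, c i * exp (I * (ξ i - c0 : ℝ) * θ)‖ := by
  have hfactor : exp (I * c0 * θ) - ∑ i ∈ s, c i * exp (I * ξ i * θ) =
      exp (I * c0 * θ) * (1 - ∑ i ∈ s, c i * exp (I * (ξ i - c0 : ℝ) * θ)) := by
    rw [mul_sub, mul_one, Finset.mul_sum]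
    congr 1
    refine Finset.sum_congr rfl fun i _ => ?_
    rw [mul_left_comm, ← Complex.exp_add]
    push_cast
    ring_nf
  rw [hfactor, norm_mul, mul_assoc, ← ofReal_mul, norm_exp_I_mul_ofReal, one_mul]

theorem zdot_sub {k : ℕ} (n n' : Fin k → ℤ) (ν : Fin k → ℝ) :
    zdot (n - n') ν = zdot n ν - zdot n' ν := by
  simp [zdot, sub_mul, Finset.sum_sub_distrib]

theorem Nonresonant.zdot_injective {k : ℕ} {ν : Fin k → ℝ} (hν : Nonresonant ν) :
    Function.Injective (zdot · ν) := fun n n' h =>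
  sub_eq_zero.mp (hν _ (by rw [zdot_sub]; exact sub_eq_zero.mpr h))

theorem exp_quasiperiodic_tune_general {k : ℕ} (ν : Fin k → ℝ) (c0 : ℝ)
    (h : IsQuasiperiodic ν fun θ : ℝ => Complex.exp (Complex.I * c0 * θ)) :
    (∃ n : Fin k → ℤ, c0 = zdot n ν) ∧
    (Nonresonant ν → ∃! n : Fin k → ℤ, c0 = zdot n ν) := by
  have hex : ∃ n : Fin k → ℤ, c0 = zdot n ν := by
    by_contra! hno
    obtain ⟨s, c, hsc⟩ := h.exists_expSum_approx (ε := 1 / 2) (by norm_num)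
    have := one_le_of_forall_norm_one_sub_expSum_le s c (fun m => zdot m ν - c0)
      (fun m _ => sub_ne_zero.mpr (hno m).symm) fun θ => by
        rw [← norm_exp_sub_expSum_eq]
        exact (hsc θ).le
    norm_num at this
  obtain ⟨n, hn⟩ := hex
  exact ⟨⟨n, hn⟩, fun hν => ⟨n, hn, fun n' hn' => hν.zdot_injective (hn'.symm.trans hn)⟩⟩

/-- Lemma 5.6. -/
theorem exp_quasiperiodic_tune {k : ℕ} (hk : 1 ≤ k) (ν : Fin k → ℝ) (c0 : ℝ)
    (h : IsQuasiperiodic ν fun θ : ℝ => Complex.exp (Complex.I * c0 * θ)) :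
    (∃ n : Fin k → ℤ, c0 = zdot n ν) ∧
    (Nonresonant ν → ∃! n : Fin k → ℤ, c0 = zdot n ν) :=
  exp_quasiperiodic_tune_general ν c0 h
end
end

section
/- In the spin-orbit setting, let 𝒱 : ℝ × ℝ^d → SO(3) be a C¹ map whose third column 𝔳³ satisfies 𝒟𝔳³ = 𝒜𝔳³, and set C_𝒱 := −(1/2) Tr[𝒥(𝒱ᵀ𝒜𝒱 − 𝒱ᵀ𝒟𝒱)]. Then for every φ₀ ∈ ℝ^d and every θ ∈ ℝ, the principal solution matrix satisfies Φ(θ;φ₀) = 𝒱(θ, ωθ+φ₀) · exp(𝒥 ∫₀^θ C_𝒱(θ', ωθ'+φ₀) dθ') · 𝒱(0, φ₀)ᵀ. -/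
open MeasureTheory Filter
noncomputable section

/-!
Differentiating `𝒱ᵀ𝒱 = 1` along `(1, ω)` shows that `W = 𝒱ᵀ𝒜𝒱 - 𝒱ᵀ𝒟𝒱` is skew-symmetric, and the
hypothesis on the third column makes the third column of `W` vanish; hence `W = C_𝒱 • 𝒥`, that is
`𝒟𝒱 = 𝒜𝒱 - C_𝒱 𝒱𝒥`. Along the orbit `θ ↦ (θ, ωθ + φ₀)` the right-hand side `Ψ` of the claimed formula
therefore solves `Ψ' = 𝒜Ψ` with `Ψ(0) = 1`: the rotation `exp (∫ C_𝒱 • 𝒥)` undoes the drift of the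
frame about its third axis. As `𝒜` is skew, `ΨᵀΦ` and `ΨᵀΨ` are constant, which forces `Φ = Ψ`.
-/
open Matrix

lemma trace_Jmat_mul (W : Matrix (Fin 3) (Fin 3) ℝ) : (Jmat * W).trace = W 0 1 - W 1 0 := by
  simp [Jmat, trace_fin_three, vecMul, dotProduct, Fin.sum_univ_three, sub_eq_neg_add]

lemma eq_smul_Jmat_of_transpose_eq_neg {W : Matrix (Fin 3) (Fin 3) ℝ} (hW : Wᵀ = -W)
    (hW2 : ∀ i, W i 2 = 0) : W = (-(1 / 2) * (Jmat * W).trace) • Jmat := by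
  have hskew : ∀ i j, W j i = -W i j := fun i j => by
    simpa using congrFun (congrFun hW i) j
  rw [trace_Jmat_mul]
  ext i j
  fin_cases i <;> fin_cases j <;> simp [Jmat, hW2, hskew 0 2, hskew 1 2] <;>
    linarith [hskew 0 0, hskew 1 1, hskew 0 1]

lemma eq_mul_sub_smul_mul_Jmat {V A D : Matrix (Fin 3) (Fin 3) ℝ} (hV : Vᵀ * V = 1)
    (hA : Aᵀ = -A) (hD : Dᵀ * V + Vᵀ * D = 0) (hD2 : ∀ k, D k 2 = (A * V) k 2) :
    D = A * V - (-(1 / 2) * (Jmat * (Vᵀ * A * V - Vᵀ * D)).trace) • (V * Jmat) := by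
  have hWT : (Vᵀ * A * V - Vᵀ * D)ᵀ = -(Vᵀ * A * V - Vᵀ * D) := by
    rw [transpose_sub, transpose_mul, transpose_mul, transpose_mul, transpose_transpose, hA,
      eq_neg_of_add_eq_zero_left hD]
    noncomm_ring
  have hW2 : ∀ i, (Vᵀ * A * V - Vᵀ * D) i 2 = 0 := fun i => by
    simp only [Matrix.mul_assoc, Matrix.mul_apply, Matrix.sub_apply, hD2, sub_self]
  have hVW : V * (Vᵀ * A * V - Vᵀ * D) = A * V - D := by
    rw [Matrix.mul_sub, ← Matrix.mul_assoc, ← Matrix.mul_assoc, ← Matrix.mul_assoc,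
      mul_eq_one_comm.mp hV, Matrix.one_mul, Matrix.one_mul]
  rw [← Matrix.mul_smul, ← eq_smul_Jmat_of_transpose_eq_neg hWT hW2, hVW]
  abel

lemma hasDerivAt_matrix_iff {m n : Type*} [Fintype n] {f : ℝ → Matrix m n ℝ}
    {f' : Matrix m n ℝ} {t : ℝ} :
    HasDerivAt f f' t ↔ ∀ i j, HasDerivAt (fun s => f s i j) (f' i j) t :=
  hasDerivAt_pi.trans (forall_congr' fun _ => hasDerivAt_pi)

lemma HasDerivAt.matrix_transpose {m n : Type*} [Fintype m] [Fintype n] {f : ℝ → Matrix m n ℝ}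
    {f' : Matrix m n ℝ} {t : ℝ} (hf : HasDerivAt f f' t) : HasDerivAt (fun s => (f s)ᵀ) f'ᵀ t :=
  hasDerivAt_matrix_iff.mpr fun i j => hasDerivAt_matrix_iff.mp hf j i

section LinearODE

attribute [local instance] Matrix.linftyOpNormedRing Matrix.linftyOpNormedAlgebra

variable {n : Type*} [Fintype n] [DecidableEq n] {A : ℝ → Matrix n n ℝ}
  {Φ Ψ : ℝ → Matrix n n ℝ}

lemma transpose_mul_eq_of_hasDerivAt (hA : ∀ t, (A t)ᵀ = -A t)
    (hΦ : ∀ t, HasDerivAt Φ (A t * Φ t) t) (hΨ : ∀ t, HasDerivAt Ψ (A t * Ψ t) t) (t : ℝ) :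
    (Ψ t)ᵀ * Φ t = (Ψ 0)ᵀ * Φ 0 := by
  have hderiv : ∀ s, HasDerivAt (fun s => (Ψ s)ᵀ * Φ s) 0 s := fun s => by
    have h := (hΨ s).matrix_transpose.fun_mul (hΦ s)
    rwa [transpose_mul, hA, Matrix.mul_neg, Matrix.neg_mul, Matrix.mul_assoc,
      neg_add_cancel] at h
  exact is_const_of_deriv_eq_zero (fun s => (hderiv s).differentiableAt)
    (fun s => (hderiv s).deriv) t 0

lemma eq_of_hasDerivAt_of_transpose_eq_neg (hA : ∀ t, (A t)ᵀ = -A t)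
    (hΦ : ∀ t, HasDerivAt Φ (A t * Φ t) t) (hΨ : ∀ t, HasDerivAt Ψ (A t * Ψ t) t)
    (h0 : Φ 0 = Ψ 0) (hΨ0 : (Ψ 0)ᵀ * Ψ 0 = 1) : Φ = Ψ := by
  funext t
  have hΨΦ : (Ψ t)ᵀ * Φ t = 1 := by rw [transpose_mul_eq_of_hasDerivAt hA hΦ hΨ, h0, hΨ0]
  have hΨΨ : Ψ t * (Ψ t)ᵀ = 1 :=
    mul_eq_one_comm.mp (by rw [transpose_mul_eq_of_hasDerivAt hA hΨ hΨ, hΨ0])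
  calc Φ t = Ψ t * (Ψ t)ᵀ * Φ t := by rw [hΨΨ, Matrix.one_mul]
    _ = Ψ t := by rw [Matrix.mul_assoc, hΨΦ, Matrix.mul_one]

lemma HasDerivAt.mul_exp_smul {V : ℝ → Matrix n n ℝ} {B K : Matrix n n ℝ} {c : ℝ}
    {I : ℝ → ℝ} {t : ℝ} (hV : HasDerivAt V (B * V t - c • (V t * K)) t)
    (hI : HasDerivAt I c t) :
    HasDerivAt (fun s => V s * NormedSpace.exp (I s • K))
      (B * (V t * NormedSpace.exp (I t • K))) t := by
  have hE : HasDerivAt (fun s => NormedSpace.exp (I s • K))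
      (c • (K * NormedSpace.exp (I t • K))) t :=
    (hasDerivAt_exp_smul_const' (𝕂 := ℝ) K (I t)).scomp t hI
  have h := hV.fun_mul hE
  rwa [Matrix.sub_mul, Matrix.mul_smul, Matrix.smul_mul, Matrix.mul_assoc, Matrix.mul_assoc,
    sub_add_cancel] at h

end LinearODE

lemma hasDerivAt_line {d : ℕ} (ω φ₀ : Fin d → ℝ) (t : ℝ) :
    HasDerivAt (fun s : ℝ => ((s, fun l => ω l * s + φ₀ l) : Pt d)) (1, ω) t := by
  refine (hasDerivAt_id t).prodMk (hasDerivAt_pi.mpr fun l => ?_)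
  simpa using ((hasDerivAt_id t).const_mul (ω l)).add_const (φ₀ l)

/-- The paper's `C_𝒱`. -/
def frameRotationRate {d : ℕ} (ω : Fin d → ℝ) (A V : Pt d → Matrix (Fin 3) (Fin 3) ℝ)
    (p : Pt d) : ℝ :=
  -(1/2) * (Jmat * ((V p).transpose * A p * V p - (V p).transpose * Dmat ω V p)).trace

def frameSolution {d : ℕ} (ω : Fin d → ℝ) (A V : Pt d → Matrix (Fin 3) (Fin 3) ℝ)
    (φ₀ : Fin d → ℝ) (θ : ℝ) : Matrix (Fin 3) (Fin 3) ℝ :=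
  V (θ, fun l => ω l * θ + φ₀ l) *
    NormedSpace.exp ((∫ t in (0:ℝ)..θ, frameRotationRate ω A V (t, fun l => ω l * t + φ₀ l)) •
      Jmat) * (V (0, φ₀)).transpose

section Frame

attribute [local instance] Matrix.linftyOpNormedRing Matrix.linftyOpNormedAlgebra

variable {d : ℕ} {ω : Fin d → ℝ} {A V : Pt d → Matrix (Fin 3) (Fin 3) ℝ}

lemma SmoothMat.continuous (hV : SmoothMat 1 V) : Continuous V :=
  continuous_pi fun i => continuous_pi fun j => (hV i j).continuous

lemma SmoothMat.continuous_Dmat (hV : SmoothMat 1 V) : Continuous (Dmat ω V) :=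
  continuous_pi fun i => continuous_pi fun j =>
    ((hV i j).continuous_fderiv one_ne_zero).clm_apply continuous_const

lemma SmoothMat.hasDerivAt_comp (hV : SmoothMat 1 V) {γ : ℝ → Pt d} {t : ℝ}
    (hγ : HasDerivAt γ (1, ω) t) : HasDerivAt (fun s => V (γ s)) (Dmat ω V (γ t)) t :=
  hasDerivAt_matrix_iff.mpr fun i j =>
    ((hV i j).differentiable one_ne_zero).differentiableAt.hasFDerivAt.comp_hasDerivAt t hγ

lemma SmoothMat.Dmat_transpose_mul_add_transpose_mul_Dmat (hV : SmoothMat 1 V)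
    (hO : ∀ p, (V p)ᵀ * V p = 1) (p : Pt d) :
    (Dmat ω V p)ᵀ * V p + (V p)ᵀ * Dmat ω V p = 0 := by
  have hγ : HasDerivAt (fun s : ℝ => p + s • ((1 : ℝ), ω)) (1, ω) 0 := by
    simpa using ((hasDerivAt_id (0 : ℝ)).smul_const ((1 : ℝ), ω)).const_add p
  have hV' := hV.hasDerivAt_comp hγ
  have hprod := hV'.matrix_transpose.fun_mul hV'
  simp only [zero_smul, add_zero, hO] at hprod
  exact hprod.unique (hasDerivAt_const _ _)

lemma SmoothMat.continuous_frameRotationRate (hA : Continuous A) (hV : SmoothMat 1 V) :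
    Continuous (frameRotationRate ω A V) := by
  have hV' := hV.continuous
  have hD := hV.continuous_Dmat (ω := ω)
  unfold frameRotationRate
  fun_prop

lemma Dmat_eq_sub_frameRotationRate_smul (hV : SmoothMat 1 V) (hSO : ∀ p, V p ∈ SO3)
    (hA : ∀ p, (A p)ᵀ = -A p)
    (hcol : ∀ (p : Pt d) (i : Fin 3),
      fderiv ℝ (fun q => V q i 2) p (1, ω) = ((A p).mulVec fun j => V p j 2) i)
    (p : Pt d) :
    Dmat ω V p = A p * V p - frameRotationRate ω A V p • (V p * Jmat) :=
  eq_mul_sub_smul_mul_Jmat (hSO p).1 (hA p)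
    (hV.Dmat_transpose_mul_add_transpose_mul_Dmat (fun q => (hSO q).1) p) (hcol p)

lemma hasDerivAt_frameSolution (hAc : Continuous A) (hV : SmoothMat 1 V)
    (hSO : ∀ p, V p ∈ SO3) (hA : ∀ p, (A p)ᵀ = -A p)
    (hcol : ∀ (p : Pt d) (i : Fin 3),
      fderiv ℝ (fun q => V q i 2) p (1, ω) = ((A p).mulVec fun j => V p j 2) i)
    (φ₀ : Fin d → ℝ) (t : ℝ) :
    HasDerivAt (frameSolution ω A V φ₀)
      (A (t, fun l => ω l * t + φ₀ l) * frameSolution ω A V φ₀ t) t := by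
  have hV' := hV.hasDerivAt_comp (hasDerivAt_line ω φ₀ t)
  rw [Dmat_eq_sub_frameRotationRate_smul hV hSO hA hcol] at hV'
  have hline : Continuous fun s : ℝ => ((s, fun l => ω l * s + φ₀ l) : Pt d) := by fun_prop
  have hI := ((hV.continuous_frameRotationRate (ω := ω) hAc).comp hline).integral_hasStrictDerivAt
    0 t
  have h := (hV'.mul_exp_smul hI.hasDerivAt).mul_const (V (0, φ₀))ᵀ
  rwa [Matrix.mul_assoc] at h

lemma frameSolution_zero (hSO : ∀ p, V p ∈ SO3) (φ₀ : Fin d → ℝ) :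
    frameSolution ω A V φ₀ 0 = 1 := by
  simp [frameSolution, mul_eq_one_comm.mp (hSO _).1]

end Frame

theorem principal_solution_from_frame_field_general {d : ℕ} (ω : Fin d → ℝ)
    (𝒜 : Pt d → Matrix (Fin 3) (Fin 3) ℝ)
    (h𝒜s : SmoothMat 1 𝒜) (h𝒜skew : ∀ p, (𝒜 p).transpose = -(𝒜 p))
    (𝒱 : Pt d → Matrix (Fin 3) (Fin 3) ℝ)
    (h𝒱s : SmoothMat 1 𝒱) (h𝒱SO3 : ∀ p, 𝒱 p ∈ SO3)
    (h𝒱col3 : ∀ (p : Pt d) (i : Fin 3),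
      fderiv ℝ (fun q => 𝒱 q i 2) p (1, ω) = ((𝒜 p).mulVec fun j => 𝒱 p j 2) i)
    (C : Pt d → ℝ)
    (hC : ∀ p, C p = -(1/2) *
      (Jmat * ((𝒱 p).transpose * 𝒜 p * 𝒱 p - (𝒱 p).transpose * Dmat ω 𝒱 p)).trace)
    (φ₀ : Fin d → ℝ) (Φ : ℝ → Matrix (Fin 3) (Fin 3) ℝ)
    (hΦ : IsPrincipalSolution ω 𝒜 φ₀ Φ) :
    ∀ θ : ℝ, Φ θ = 𝒱 (θ, fun l => ω l * θ + φ₀ l) *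
      NormedSpace.exp ((∫ t in (0:ℝ)..θ, C (t, fun l => ω l * t + φ₀ l)) • Jmat) *
      (𝒱 (0, φ₀)).transpose := by
  obtain rfl : C = frameRotationRate ω 𝒜 𝒱 := funext hC
  have hΦ' : ∀ t, HasDerivAt Φ (𝒜 (t, fun l => ω l * t + φ₀ l) * Φ t) t := fun t =>
    hasDerivAt_matrix_iff.mpr (hΦ.2 t)
  have hΨ := hasDerivAt_frameSolution h𝒜s.continuous h𝒱s h𝒱SO3 h𝒜skew h𝒱col3 φ₀
  have hΨ0 : frameSolution ω 𝒜 𝒱 φ₀ 0 = 1 := frameSolution_zero h𝒱SO3 φ₀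
  have hΦΨ : Φ = frameSolution ω 𝒜 𝒱 φ₀ :=
    eq_of_hasDerivAt_of_transpose_eq_neg (fun t => h𝒜skew _) hΦ' hΨ (hΦ.1.trans hΨ0.symm)
      (by rw [hΨ0, transpose_one, Matrix.one_mul])
  exact congrFun hΦΨ

/-- Theorem 6.1. -/
theorem principal_solution_from_frame_field {d : ℕ} (hd : 1 ≤ d) (ω : Fin d → ℝ)
    (𝒜 : Pt d → Matrix (Fin 3) (Fin 3) ℝ)
    (h𝒜s : SmoothMat 1 𝒜) (h𝒜skew : ∀ p, (𝒜 p).transpose = -(𝒜 p))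
    (h𝒜per : PeriodicPt 𝒜)
    (𝒱 : Pt d → Matrix (Fin 3) (Fin 3) ℝ)
    (h𝒱s : SmoothMat 1 𝒱) (h𝒱SO3 : ∀ p, 𝒱 p ∈ SO3)
    (h𝒱col3 : ∀ (p : Pt d) (i : Fin 3),
      fderiv ℝ (fun q => 𝒱 q i 2) p (1, ω) = ((𝒜 p).mulVec fun j => 𝒱 p j 2) i)
    (C : Pt d → ℝ)
    (hC : ∀ p, C p = -(1/2) *
      (Jmat * ((𝒱 p).transpose * 𝒜 p * 𝒱 p - (𝒱 p).transpose * Dmat ω 𝒱 p)).trace)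
    (φ₀ : Fin d → ℝ) (Φ : ℝ → Matrix (Fin 3) (Fin 3) ℝ)
    (hΦ : IsPrincipalSolution ω 𝒜 φ₀ Φ) :
    ∀ θ : ℝ, Φ θ = 𝒱 (θ, fun l => ω l * θ + φ₀ l) *
      NormedSpace.exp ((∫ t in (0:ℝ)..θ, C (t, fun l => ω l * t + φ₀ l)) • Jmat) *
      (𝒱 (0, φ₀)).transpose :=
  principal_solution_from_frame_field_general ω 𝒜 h𝒜s h𝒜skew 𝒱 h𝒱s h𝒱SO3 h𝒱col3 C hC φ₀ Φ hΦ
end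
end
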